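/- arXiv:2001.02373 — 2 statements merged into one kernel-verified Lean document; each statement's English description precedes it below -/
import Mathlib

section
/- Let $T^3$ be a product of three finite trees with tri-parameter Hardy operator $\mathbf{I}$. Let $0 < \delta \leq \lambda/4$ and let $f : T^3 \to [0,\infty)$ be supported on $\{\mathbf{I} f \leq \delta\}$. Then pointwise $(\mathbf{I} f)\, \mathbf{1}_{\{\lambda \leq \mathbf{I} f \leq 2\lambda\}} \leq 4\lambda^{-1}\, \mathbf{I}\Big( \sum_{i \in \{1,2,3\}} I_i f \cdot I_{(i)} f \cdot \mathbf{1}_{\{\mathbf{I} f \leq 2\lambda\}} \Big)$, where $I_{(i)} = \prod_{j \neq i} I_j$. -/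
open Finset
open scoped Classical

/-- A tree order: the set of elements above any given element is totally ordered. -/
def IsTreeOrder (T : Type*) [PartialOrder T] : Prop :=
  ∀ ω a b : T, ω ≤ a → ω ≤ b → a ≤ b ∨ b ≤ a

/-- The Hardy operator `I f α = ∑_{α' ≥ α} f α'`. -/
noncomputable def hI {T : Type*} [Fintype T] [PartialOrder T] (f : T → ℝ) (a : T) : ℝ :=
  ∑ b, if a ≤ b then f b else 0

/-- The adjoint Hardy operator `I* f β = ∑_{α ≤ β} f α`. -/
noncomputable def hIstar {T : Type*} [Fintype T] [PartialOrder T] (f : T → ℝ) (b : T) : ℝ :=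
  ∑ a, if a ≤ b then f a else 0

/-- `b` is a child of `β`: a maximal element of the set of elements strictly below `β`. -/
def IsChild {T : Type*} [PartialOrder T] (b β : T) : Prop :=
  b < β ∧ ∀ c, b < c → c < β → False

/-- The difference operator `Δ f β = f β - ∑_{β' ∈ ch β} f β'`. -/
noncomputable def hDelta {T : Type*} [Fintype T] [PartialOrder T] (f : T → ℝ) (β : T) : ℝ :=
  f β - ∑ b, if IsChild b β then f b else 0

/-- A superadditive function on a tree: `f β ≥ ∑_{β' ∈ ch β} f β'` for all `β`. -/
def Superadd {T : Type*} [Fintype T] [PartialOrder T] (f : T → ℝ) : Prop :=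
  ∀ β : T, (∑ b, if IsChild b β then f b else 0) ≤ f β

/-- The Hardy operator acting in the first coordinate of a tri-tree. -/
noncomputable def k1 {T1 T2 T3 : Type*} [Fintype T1] [PartialOrder T1]
    (f : T1 × T2 × T3 → ℝ) (a : T1 × T2 × T3) : ℝ :=
  ∑ b : T1, if a.1 ≤ b then f (b, a.2.1, a.2.2) else 0

/-- The Hardy operator acting in the second coordinate of a tri-tree. -/
noncomputable def k2 {T1 T2 T3 : Type*} [Fintype T2] [PartialOrder T2]
    (f : T1 × T2 × T3 → ℝ) (a : T1 × T2 × T3) : ℝ :=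
  ∑ b : T2, if a.2.1 ≤ b then f (a.1, b, a.2.2) else 0

/-- The Hardy operator acting in the third coordinate of a tri-tree. -/
noncomputable def k3 {T1 T2 T3 : Type*} [Fintype T3] [PartialOrder T3]
    (f : T1 × T2 × T3 → ℝ) (a : T1 × T2 × T3) : ℝ :=
  ∑ b : T3, if a.2.2 ≤ b then f (a.1, a.2.1, b) else 0

/-- Superadditivity in the first parameter separately. -/
def SuperaddT1 {T1 T2 T3 : Type*} [Fintype T1] [PartialOrder T1]
    (f : T1 × T2 × T3 → ℝ) : Prop :=
  ∀ (β : T1) (a2 : T2) (a3 : T3),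
    (∑ b, if IsChild b β then f (b, a2, a3) else 0) ≤ f (β, a2, a3)

/-- Superadditivity in the second parameter separately. -/
def SuperaddT2 {T1 T2 T3 : Type*} [Fintype T2] [PartialOrder T2]
    (f : T1 × T2 × T3 → ℝ) : Prop :=
  ∀ (a1 : T1) (β : T2) (a3 : T3),
    (∑ b, if IsChild b β then f (a1, b, a3) else 0) ≤ f (a1, β, a3)

/-- Superadditivity in the third parameter separately. -/
def SuperaddT3 {T1 T2 T3 : Type*} [Fintype T3] [PartialOrder T3]
    (f : T1 × T2 × T3 → ℝ) : Prop :=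
  ∀ (a1 : T1) (a2 : T2) (β : T3),
    (∑ b, if IsChild b β then f (a1, a2, b) else 0) ≤ f (a1, a2, β)

/-!
Write `S = 𝐈 f α = ∑_{a ≥ α} f a`, so that `S² = ∑_{a, b ≥ α} f a f b`. In a product of trees the
coordinates of two points above `α` are pairwise comparable, so up to swapping `a` and `b` either
`a ≤ b`, or `a` and `b` are in cross position for some `i` (`bᵢ ≤ aᵢ`, the other coordinates the
other way round). Comparable pairs contribute at most `∑_{a ≥ α} f a 𝐈 f a ≤ δ S` by the support
condition. Cross pairs are parametrised by their meet `c ≥ α` and contribute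
`∑_{c ≥ α} Iᵢ f c · I_(i) f c`. Hence `λ S ≤ S² ≤ 2 δ S + 2 𝐈 (∑ᵢ Iᵢ f · I_(i) f) α`, and
`δ ≤ λ / 4` gives the claim; the indicator is harmless because `𝐈 f c ≤ 𝐈 f α ≤ 2λ` for `c ≥ α`.
-/

section HardyPairs

variable {X : Type*} [Fintype X]

theorem hI_nonneg [PartialOrder X] {f : X → ℝ} (hf : ∀ a, 0 ≤ f a) (α : X) : 0 ≤ hI f α :=
  Finset.sum_nonneg fun b _ => by split_ifs <;> simp [hf b]

theorem hI_antitone [PartialOrder X] {f : X → ℝ} (hf : ∀ a, 0 ≤ f a) : Antitone (hI f) :=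
  fun _ _ hab => Finset.sum_le_sum fun c _ => by
    split_ifs with hb ha <;> first | exact le_rfl | exact hf c | exact absurd (hab.trans hb) ha

theorem hI_congr [PartialOrder X] {f g : X → ℝ} {α : X} (h : ∀ c, α ≤ c → f c = g c) :
    hI f α = hI g α := by
  refine Finset.sum_congr rfl fun c _ => ?_
  split_ifs with hc
  exacts [h c hc, rfl]

theorem hI_add [PartialOrder X] (f g : X → ℝ) (α : X) :
    hI (fun a => f a + g a) α = hI f α + hI g α := by
  simp only [hI, ← Finset.sum_add_distrib, ite_add_ite, add_zero]

noncomputable def pairSumAbove [Preorder X] (f : X → ℝ) (α : X) (R : X → X → Prop) : ℝ :=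
  ∑ a, ∑ b, if α ≤ a ∧ α ≤ b ∧ R a b then f a * f b else 0

theorem pairSumAbove_swap [Preorder X] (f : X → ℝ) (α : X) (R : X → X → Prop) :
    pairSumAbove f α (fun a b => R b a) = pairSumAbove f α R := by
  rw [pairSumAbove, Finset.sum_comm]
  refine Finset.sum_congr rfl fun a _ => Finset.sum_congr rfl fun b _ => ?_
  simp only [and_left_comm, mul_comm]

theorem sq_hI_le_two_mul_sum_pairSumAbove [PartialOrder X] {ι : Type*} [Fintype ι]
    {f : X → ℝ} (hf : ∀ a, 0 ≤ f a) (α : X) (R : ι → X → X → Prop)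
    (hcover : ∀ a b, α ≤ a → α ≤ b → ∃ i, R i a b ∨ R i b a) :
    hI f α ^ 2 ≤ 2 * ∑ i, pairSumAbove f α (R i) := by
  have hpair : ∀ a b, (if α ≤ a ∧ α ≤ b then f a * f b else 0) ≤
      ∑ i, ((if α ≤ a ∧ α ≤ b ∧ R i a b then f a * f b else 0) +
        (if α ≤ a ∧ α ≤ b ∧ R i b a then f a * f b else 0)) := by
    intro a b
    have hnonneg : ∀ i, 0 ≤ (if α ≤ a ∧ α ≤ b ∧ R i a b then f a * f b else 0) +
        (if α ≤ a ∧ α ≤ b ∧ R i b a then f a * f b else 0) := fun i => by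
      have := mul_nonneg (hf a) (hf b)
      split_ifs <;> linarith
    split_ifs with hab
    · obtain ⟨i, hi⟩ := hcover a b hab.1 hab.2
      refine le_trans ?_ (Finset.single_le_sum (fun i _ => hnonneg i) (Finset.mem_univ i))
      have := mul_nonneg (hf a) (hf b)
      rcases hi with hi | hi <;> split_ifs <;> simp_all
    · exact Finset.sum_nonneg fun i _ => hnonneg i
  have hsq : hI f α ^ 2 = ∑ a, ∑ b, if α ≤ a ∧ α ≤ b then f a * f b else 0 := by
    rw [sq, hI, Finset.sum_mul_sum]
    refine Finset.sum_congr rfl fun a _ => Finset.sum_congr rfl fun b _ => ?_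
    by_cases ha : α ≤ a <;> by_cases hb : α ≤ b <;> simp [ha, hb]
  calc hI f α ^ 2 ≤ ∑ a, ∑ b, ∑ i, ((if α ≤ a ∧ α ≤ b ∧ R i a b then f a * f b else 0) +
        (if α ≤ a ∧ α ≤ b ∧ R i b a then f a * f b else 0)) :=
        hsq ▸ Finset.sum_le_sum fun a _ => Finset.sum_le_sum fun b _ => hpair a b
    _ = ∑ i, (pairSumAbove f α (R i) + pairSumAbove f α (fun a b => R i b a)) := by
        simp only [pairSumAbove, ← Finset.sum_add_distrib]
        exact (Finset.sum_congr rfl fun a _ => Finset.sum_comm).trans Finset.sum_comm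
    _ = 2 * ∑ i, pairSumAbove f α (R i) := by
        simp only [pairSumAbove_swap, ← two_mul, Finset.mul_sum]

theorem pairSumAbove_le_mul_hI_of_support [PartialOrder X] {f : X → ℝ} (hf : ∀ a, 0 ≤ f a) {δ : ℝ}
    (hsupp : ∀ a, f a ≠ 0 → hI f a ≤ δ) (α : X) :
    pairSumAbove f α (· ≤ ·) ≤ δ * hI f α := by
  calc pairSumAbove f α (· ≤ ·) = ∑ a, if α ≤ a then f a * hI f a else 0 := by
        refine Finset.sum_congr rfl fun a _ => ?_
        split_ifs with ha
        · rw [hI, Finset.mul_sum]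
          refine Finset.sum_congr rfl fun b _ => ?_
          by_cases hb : a ≤ b
          · simp [ha, hb, ha.trans hb]
          · simp [hb]
        · exact Finset.sum_eq_zero fun b _ => by simp [ha]
    _ ≤ ∑ a, if α ≤ a then δ * f a else 0 := by
        refine Finset.sum_le_sum fun a _ => ?_
        split_ifs
        · rcases eq_or_ne (f a) 0 with h0 | h0
          · simp [h0]
          · rw [mul_comm δ]
            exact mul_le_mul_of_nonneg_left (hsupp a h0) (hf a)
        · exact le_rfl
    _ = δ * hI f α := by
        rw [hI, Finset.mul_sum]
        exact Finset.sum_congr rfl fun a _ => by split_ifs <;> simp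

end HardyPairs

section CrossPairs

variable {X P Q : Type*} [Fintype X] [Fintype P] [Fintype Q] [Preorder P] [Preorder Q]

def CrossLE [LE X] (e : X ≃o P × Q) (a b : X) : Prop :=
  (e b).1 ≤ (e a).1 ∧ (e a).2 ≤ (e b).2

theorem pairSumAbove_crossLE [PartialOrder X] [DecidableLE P] [DecidableLE Q] (e : X ≃o P × Q)
    (f : X → ℝ) (α : X) :
    pairSumAbove f α (CrossLE e) = hI (fun c =>
      (∑ u, if (e c).1 ≤ u then f (e.symm (u, (e c).2)) else 0) *
        ∑ v, if (e c).2 ≤ v then f (e.symm ((e c).1, v)) else 0) α := by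
  -- a pair `a, b` in cross position is parametrised by its meet `c = e⁻¹ ((e b).1, (e a).2)`
  -- together with `(e a).1 ≥ (e c).1` and `(e b).2 ≥ (e c).2`
  let σ : X × P × Q ≃ X × X :=
    { toFun := fun x => (e.symm (x.2.1, (e x.1).2), e.symm ((e x.1).1, x.2.2))
      invFun := fun y => (e.symm ((e y.2).1, (e y.1).2), (e y.1).1, (e y.2).2)
      left_inv := fun x => by simp
      right_inv := fun y => by simp }
  have hexpand : ∀ c, (if α ≤ c then (∑ u, if (e c).1 ≤ u then f (e.symm (u, (e c).2)) else 0) *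
        ∑ v, if (e c).2 ≤ v then f (e.symm ((e c).1, v)) else 0 else 0) =
      ∑ u, ∑ v, if α ≤ c ∧ (e c).1 ≤ u ∧ (e c).2 ≤ v then
        f (e.symm (u, (e c).2)) * f (e.symm ((e c).1, v)) else 0 := by
    intro c
    split_ifs with hc
    · rw [Finset.sum_mul_sum]
      refine Finset.sum_congr rfl fun u _ => Finset.sum_congr rfl fun v _ => ?_
      by_cases hu : (e c).1 ≤ u <;> by_cases hv : (e c).2 ≤ v <;> simp [hc, hu, hv]
    · simp [hc]
  rw [hI, Finset.sum_congr rfl fun c _ => hexpand c, pairSumAbove,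
    ← Fintype.sum_prod_type', ← Finset.sum_congr rfl fun c _ => Fintype.sum_prod_type' _,
    ← Fintype.sum_prod_type']
  refine (Fintype.sum_equiv σ _ _ fun x => ?_).symm
  obtain ⟨c, u, v⟩ := x
  simp only [σ, Equiv.coe_fn_mk, CrossLE, OrderIso.apply_symm_apply]
  refine if_congr ?_ rfl rfl
  rw [← e.le_iff_le, OrderIso.le_symm_apply, OrderIso.le_symm_apply]
  simp only [Prod.le_def]
  constructor
  · rintro ⟨⟨h1, h2⟩, hu, hv⟩
    exact ⟨⟨h1.trans hu, h2⟩, ⟨h1, h2.trans hv⟩, hu, hv⟩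
  · rintro ⟨⟨-, h2⟩, ⟨h1, -⟩, hu, hv⟩
    exact ⟨⟨h1, h2⟩, hu, hv⟩

end CrossPairs

theorem sum_ite_le_prod {P Q : Type*} [Fintype P] [Fintype Q] [Preorder P] [Preorder Q]
    [DecidableLE P] [DecidableLE Q] (g : P × Q → ℝ) (p : P × Q) :
    (∑ v, if p ≤ v then g v else 0) =
      ∑ x, if p.1 ≤ x then ∑ y, if p.2 ≤ y then g (x, y) else 0 else 0 := by
  rw [Fintype.sum_prod_type]
  refine Finset.sum_congr rfl fun x _ => ?_
  by_cases hx : p.1 ≤ x <;> simp [Prod.le_def, hx]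

section Nonneg

variable {T1 T2 T3 : Type*} {f : T1 × T2 × T3 → ℝ}

theorem k1_nonneg [Fintype T1] [PartialOrder T1] (hf : ∀ a, 0 ≤ f a) (a : T1 × T2 × T3) :
    0 ≤ k1 f a :=
  Finset.sum_nonneg fun b _ => by split_ifs <;> simp [hf]

theorem k2_nonneg [Fintype T2] [PartialOrder T2] (hf : ∀ a, 0 ≤ f a) (a : T1 × T2 × T3) :
    0 ≤ k2 f a :=
  Finset.sum_nonneg fun b _ => by split_ifs <;> simp [hf]

theorem k3_nonneg [Fintype T3] [PartialOrder T3] (hf : ∀ a, 0 ≤ f a) (a : T1 × T2 × T3) :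
    0 ≤ k3 f a :=
  Finset.sum_nonneg fun b _ => by split_ifs <;> simp [hf]

end Nonneg

section TriTree

variable {T1 T2 T3 : Type*} [PartialOrder T1] [PartialOrder T2] [PartialOrder T3]

variable (T1 T2 T3) in
def secondToFront : T1 × T2 × T3 ≃o T2 × T1 × T3 where
  toFun x := (x.2.1, x.1, x.2.2)
  invFun x := (x.2.1, x.1, x.2.2)
  left_inv _ := rfl
  right_inv _ := rfl
  map_rel_iff' := by
    rintro ⟨a1, a2, a3⟩ ⟨b1, b2, b3⟩
    simp only [Equiv.coe_fn_mk, Prod.mk_le_mk]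
    tauto

variable (T1 T2 T3) in
def thirdToFront : T1 × T2 × T3 ≃o T3 × T1 × T2 where
  toFun x := (x.2.2, x.1, x.2.1)
  invFun x := (x.2.1, x.2.2, x.1)
  left_inv _ := rfl
  right_inv _ := rfl
  map_rel_iff' := by
    rintro ⟨a1, a2, a3⟩ ⟨b1, b2, b3⟩
    simp only [Equiv.coe_fn_mk, Prod.mk_le_mk]
    tauto

theorem le_or_crossLE_of_isTreeOrder (h1 : IsTreeOrder T1) (h2 : IsTreeOrder T2)
    (h3 : IsTreeOrder T3) {α a b : T1 × T2 × T3} (ha : α ≤ a) (hb : α ≤ b) :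
    (a ≤ b ∨ b ≤ a) ∨ (CrossLE (OrderIso.refl _) a b ∨ CrossLE (OrderIso.refl _) b a) ∨
      (CrossLE (secondToFront T1 T2 T3) a b ∨ CrossLE (secondToFront T1 T2 T3) b a) ∨
      (CrossLE (thirdToFront T1 T2 T3) a b ∨ CrossLE (thirdToFront T1 T2 T3) b a) := by
  obtain ⟨ha1, ha2, ha3⟩ := ha
  obtain ⟨hb1, hb2, hb3⟩ := hb
  have c1 := h1 _ _ _ ha1 hb1
  have c2 := h2 _ _ _ ha2 hb2
  have c3 := h3 _ _ _ ha3 hb3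
  simp only [CrossLE, secondToFront, thirdToFront, OrderIso.refl_apply, RelIso.coe_fn_mk,
    Equiv.coe_fn_mk, Prod.le_def]
  rcases c1 with c1 | c1 <;> rcases c2 with c2 | c2 <;> rcases c3 with c3 | c3 <;> simp [c1, c2, c3]

variable [Fintype T1] [Fintype T2] [Fintype T3]

theorem pairSumAbove_crossLE_refl (f : T1 × T2 × T3 → ℝ) (α : T1 × T2 × T3) :
    pairSumAbove f α (CrossLE (OrderIso.refl _)) = hI (fun c => k1 f c * k2 (k3 f) c) α := by
  rw [pairSumAbove_crossLE]
  congr! 3 with c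
  exact sum_ite_le_prod _ _

theorem pairSumAbove_crossLE_secondToFront (f : T1 × T2 × T3 → ℝ) (α : T1 × T2 × T3) :
    pairSumAbove f α (CrossLE (secondToFront T1 T2 T3)) =
      hI (fun c => k2 f c * k1 (k3 f) c) α := by
  rw [pairSumAbove_crossLE]
  congr! 3 with c
  exact sum_ite_le_prod _ _

theorem pairSumAbove_crossLE_thirdToFront (f : T1 × T2 × T3 → ℝ) (α : T1 × T2 × T3) :
    pairSumAbove f α (CrossLE (thirdToFront T1 T2 T3)) =
      hI (fun c => k3 f c * k1 (k2 f) c) α := by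
  rw [pairSumAbove_crossLE]
  congr! 3 with c
  exact sum_ite_le_prod _ _

end TriTree

theorem stmt7 {T1 T2 T3 : Type*} [Fintype T1] [PartialOrder T1] [Fintype T2] [PartialOrder T2]
    [Fintype T3] [PartialOrder T3]
    (h1 : IsTreeOrder T1) (h2 : IsTreeOrder T2) (h3 : IsTreeOrder T3)
    (δ lam : ℝ) (hδ : 0 < δ) (hδlam : δ ≤ lam / 4)
    (f : T1 × T2 × T3 → ℝ) (hf : ∀ a, 0 ≤ f a)
    (hsupp : ∀ a, f a ≠ 0 → hI f a ≤ δ) (α : T1 × T2 × T3) :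
    (if lam ≤ hI f α ∧ hI f α ≤ 2 * lam then hI f α else 0) ≤
      4 / lam * hI (fun a =>
        (k1 f a * k2 (k3 f) a + k2 f a * k1 (k3 f) a + k3 f a * k1 (k2 f) a) *
          (if hI f a ≤ 2 * lam then 1 else 0)) α := by
  have hlam : 0 < lam := by linarith
  split_ifs with hS
  · set M₁ := hI (fun c => k1 f c * k2 (k3 f) c) α
    set M₂ := hI (fun c => k2 f c * k1 (k3 f) c) α
    set M₃ := hI (fun c => k3 f c * k1 (k2 f) c) α
    have hG : hI (fun a => (k1 f a * k2 (k3 f) a + k2 f a * k1 (k3 f) a + k3 f a * k1 (k2 f) a) *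
        (if hI f a ≤ 2 * lam then 1 else 0)) α = M₁ + M₂ + M₃ := by
      rw [hI_congr fun c hc => by rw [if_pos ((hI_antitone hf hc).trans hS.2), mul_one],
        hI_add, hI_add]
    have hsq : hI f α ^ 2 ≤ 2 * (pairSumAbove f α (· ≤ ·) + M₁ + M₂ + M₃) := by
      have := sq_hI_le_two_mul_sum_pairSumAbove hf α
        ![(· ≤ ·), CrossLE (OrderIso.refl _), CrossLE (secondToFront T1 T2 T3),
          CrossLE (thirdToFront T1 T2 T3)]
        fun a b ha hb => by
          simpa [Fin.exists_fin_succ, or_assoc] using le_or_crossLE_of_isTreeOrder h1 h2 h3 ha hb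
      simpa [Fin.sum_univ_four, pairSumAbove_crossLE_refl, pairSumAbove_crossLE_secondToFront,
        pairSumAbove_crossLE_thirdToFront, add_assoc] using this
    have hdiag := pairSumAbove_le_mul_hI_of_support hf hsupp α
    rw [hG, div_mul_eq_mul_div, le_div_iff₀ hlam]
    nlinarith [hS.1, hI_nonneg hf α]
  · refine mul_nonneg (by positivity) (hI_nonneg (fun a => mul_nonneg ?_ ?_) α)
    · exact add_nonneg (add_nonneg (mul_nonneg (k1_nonneg hf a) (k2_nonneg (k3_nonneg hf) a))
        (mul_nonneg (k2_nonneg hf a) (k1_nonneg (k3_nonneg hf) a)))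
        (mul_nonneg (k3_nonneg hf a) (k1_nonneg (k2_nonneg hf) a))
    · split_ifs <;> norm_num
end

section
/- Let $T^2$ be a bi-tree, $w(\alpha_1,\alpha_2) = w_1(\alpha_1) w_2(\alpha_2)$ a nonnegative tensor-product weight, and $f : T^2 \to [0,\infty)$ superadditive in each parameter separately. Suppose $\operatorname{supp} f \subseteq \{ \mathbb{I}(wf) \leq \delta \}$. Then $\sum_{T^2} w f \cdot I_1(w_1 f) \cdot I_2(w_2 f) \cdot \mathbb{I}(wf) \leq \delta^2 \sum_{T^2} w f^2$. -/
/-!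
On the support of `f` the factor `𝕀(wf)` is at most `δ`, so it suffices to show
`∑ wf · I₁(w₁f) · I₂(w₂f) ≤ δ ∑ wf²`. Fix the second coordinate `y` and move `I₁` onto the other
factor by duality (`∑ g · I u = ∑ I*g · u`): everything reduces to a one-parameter estimate on the
tree `T₁`, namely `I*(g v) ≤ δ g` for `g ≥ 0` superadditive and `v ≥ 0` with `I v ≤ δ` on the
support of `g`. It is applied to `g = f(·, y)` and `v = w₁ · I₂(w₂f)(·, y)`, for which
`I v = 𝕀(wf)(·, y)` because `𝕀 = I₁ I₂`.

The one-parameter estimate goes by induction up the tree: `I*(g v)(x)` splits into `g x · v x` and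
the values of `I*(g v)` at the children `c` of `x`, each of which sees the same budget
`I v c - v c = I v x` above it, and superadditivity `∑_{c ∈ ch x} g c ≤ g x` closes the step.
-/

open Finset
open scoped Classical

/-- The Hardy operator acting in the first coordinate of a bi-tree. -/
noncomputable def hI1 {T1 T2 : Type*} [Fintype T1] [PartialOrder T1]
    (f : T1 × T2 → ℝ) (a : T1 × T2) : ℝ :=
  ∑ b : T1, if a.1 ≤ b then f (b, a.2) else 0

/-- The Hardy operator acting in the second coordinate of a bi-tree. -/
noncomputable def hI2 {T1 T2 : Type*} [Fintype T2] [PartialOrder T2]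
    (f : T1 × T2 → ℝ) (a : T1 × T2) : ℝ :=
  ∑ b : T2, if a.2 ≤ b then f (a.1, b) else 0

/-- Superadditivity in the first parameter separately. -/
def Superadd1 {T1 T2 : Type*} [Fintype T1] [PartialOrder T1]
    (f : T1 × T2 → ℝ) : Prop :=
  ∀ (β : T1) (a2 : T2), (∑ b, if IsChild b β then f (b, a2) else 0) ≤ f (β, a2)

/-- Superadditivity in the second parameter separately. -/
def Superadd2 {T1 T2 : Type*} [Fintype T2] [PartialOrder T2]
    (f : T1 × T2 → ℝ) : Prop :=
  ∀ (a1 : T1) (β : T2), (∑ b, if IsChild b β then f (a1, b) else 0) ≤ f (a1, β)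

theorem isChild_iff_covBy {T : Type*} [PartialOrder T] {c x : T} : IsChild c x ↔ c ⋖ x :=
  ⟨fun h => ⟨h.1, fun d hcd hdx => h.2 d hcd hdx⟩, fun h => ⟨h.1, fun _ hcd hdx => h.2 hcd hdx⟩⟩

section HardyOperators

variable {T : Type*} [Fintype T] [PartialOrder T]

theorem hI_nonneg_s11 {f : T → ℝ} (hf : ∀ t, 0 ≤ f t) (x : T) : 0 ≤ hI f x :=
  sum_nonneg fun t _ => by split_ifs <;> simp [hf t]

theorem hI_eq_add_sum_gt (f : T → ℝ) (x : T) : hI f x = f x + ∑ t ∈ {t | x < t}, f t := by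
  have hIci : univ.filter (x ≤ ·) = insert x (univ.filter (x < ·)) := by
    ext t; simp [le_iff_eq_or_lt, eq_comm]
  rw [hI, ← sum_filter, hIci, sum_insert (by simp)]

theorem hIstar_eq_add_sum_lt (f : T → ℝ) (x : T) : hIstar f x = f x + ∑ t ∈ {t | t < x}, f t := by
  have hIic : univ.filter (· ≤ x) = insert x (univ.filter (· < x)) := by
    ext t; simp [le_iff_eq_or_lt]
  rw [hIstar, ← sum_filter, hIic, sum_insert (by simp)]

theorem sum_mul_hI_eq_sum_hIstar_mul (g u : T → ℝ) :
    ∑ t, g t * hI u t = ∑ x, hIstar g x * u x := by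
  simp only [hI, hIstar, mul_sum, sum_mul, mul_ite, ite_mul, mul_zero, zero_mul]
  exact sum_comm

end HardyOperators

namespace IsTreeOrder

variable {T : Type*} [PartialOrder T]

theorem eq_of_isChild_of_le (hT : IsTreeOrder T) {t c c' x : T} (hc : IsChild c x)
    (hc' : IsChild c' x) (ht : t ≤ c) (ht' : t ≤ c') : c = c' := by
  rcases hT t c c' ht ht' with h | h
  · exact h.eq_or_lt.resolve_right fun hlt => hc.2 c' hlt hc'.1
  · exact (h.eq_or_lt.resolve_right fun hlt => hc'.2 c hlt hc.1).symm

theorem le_iff_lt_of_isChild (hT : IsTreeOrder T) {c x d : T} (hc : IsChild c x) :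
    x ≤ d ↔ c < d := by
  refine ⟨hc.1.trans_le, fun hcd => ?_⟩
  rcases hT c d x hcd.le hc.1.le with h | h
  · exact h.eq_or_lt.elim (fun e => e.ge) fun hlt => (hc.2 d hcd hlt).elim
  · exact h

theorem sum_lt_eq_sum_isChild {M : Type*} [AddCommMonoid M] [Fintype T] (hT : IsTreeOrder T)
    (φ : T → M) (x : T) :
    ∑ t ∈ {t | t < x}, φ t = ∑ c ∈ {c | IsChild c x}, ∑ t ∈ {t | t ≤ c}, φ t := by
  rw [← sum_biUnion]
  · congr 1
    ext t
    simp only [mem_filter, mem_univ, true_and, mem_biUnion]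
    refine ⟨fun ht => ?_, fun ⟨c, hc, htc⟩ => htc.trans_lt hc.1⟩
    obtain ⟨c, htc, hc⟩ := exists_le_covBy_of_lt ht
    exact ⟨c, isChild_iff_covBy.2 hc, htc⟩
  · intro c hc c' hc' hne
    simp only [coe_filter, mem_univ, true_and] at hc hc'
    refine disjoint_left.2 fun t htc htc' => hne ?_
    simp only [mem_filter, mem_univ, true_and] at htc htc'
    exact hT.eq_of_isChild_of_le hc hc' htc htc'

theorem hIstar_eq_add_sum_isChild [Fintype T] (hT : IsTreeOrder T) (f : T → ℝ) (x : T) :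
    hIstar f x = f x + ∑ c ∈ {c | IsChild c x}, hIstar f c := by
  rw [hIstar_eq_add_sum_lt, hT.sum_lt_eq_sum_isChild]
  simp only [hIstar, sum_filter]

theorem hI_of_isChild [Fintype T] (hT : IsTreeOrder T) (f : T → ℝ) {c x : T}
    (hc : IsChild c x) : hI f c = f c + hI f x := by
  rw [hI_eq_add_sum_gt, hI, ← sum_filter]
  congr 2
  ext d
  simp [hT.le_iff_lt_of_isChild hc]

/-- The form of `hIstar_mul_le` that survives induction up the tree: the budget `hI v x - v x`
already spent strictly above `x` is deducted from `δ`. -/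
theorem hIstar_mul_le_mul_sub [Fintype T] (hT : IsTreeOrder T) {g v : T → ℝ}
    (hg : ∀ t, 0 ≤ g t) (hsg : Superadd g) {δ : ℝ} (hδ : ∀ t, g t ≠ 0 → hI v t ≤ δ) (x : T) :
    hIstar (fun t => g t * v t) x ≤ g x * (δ - (hI v x - v x)) := by
  induction x using WellFoundedLT.induction with
  | _ x ih =>
  have hchildren : ∑ c ∈ {c | IsChild c x}, hIstar (fun t => g t * v t) c
      ≤ (δ - hI v x) * ∑ c ∈ {c | IsChild c x}, g c := by
    rw [mul_sum]
    gcongr with c hc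
    simp only [mem_filter, mem_univ, true_and] at hc
    calc hIstar (fun t => g t * v t) c ≤ g c * (δ - (hI v c - v c)) := ih c hc.1
      _ = (δ - hI v x) * g c := by rw [hT.hI_of_isChild v hc]; ring
  have hsum : ∑ c ∈ {c | IsChild c x}, g c ≤ g x := by
    rw [sum_filter]; exact hsg x
  have hsuper : (δ - hI v x) * ∑ c ∈ {c | IsChild c x}, g c ≤ (δ - hI v x) * g x := by
    by_cases hgx : g x = 0
    · rw [le_antisymm (hsum.trans hgx.le) (sum_nonneg fun c _ => hg c), hgx]
    · exact mul_le_mul_of_nonneg_left hsum (sub_nonneg.2 (hδ x hgx))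
  rw [hT.hIstar_eq_add_sum_isChild]
  linarith

theorem hIstar_mul_le [Fintype T] (hT : IsTreeOrder T) {g v : T → ℝ} (hg : ∀ t, 0 ≤ g t)
    (hsg : Superadd g) (hv : ∀ t, 0 ≤ v t) {δ : ℝ} (hδ : ∀ t, g t ≠ 0 → hI v t ≤ δ) (x : T) :
    hIstar (fun t => g t * v t) x ≤ δ * g x := by
  have hgt : 0 ≤ hI v x - v x := by
    rw [hI_eq_add_sum_gt, add_sub_cancel_left]
    exact sum_nonneg fun t _ => hv t
  calc hIstar (fun t => g t * v t) x ≤ g x * (δ - (hI v x - v x)) :=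
        hT.hIstar_mul_le_mul_sub hg hsg hδ x
    _ ≤ δ * g x := by linarith [mul_nonneg (hg x) hgt]

theorem sum_mul_mul_hI_le [Fintype T] (hT : IsTreeOrder T) {g v u : T → ℝ} (hg : ∀ t, 0 ≤ g t)
    (hsg : Superadd g) (hv : ∀ t, 0 ≤ v t) (hu : ∀ t, 0 ≤ u t) {δ : ℝ}
    (hδ : ∀ t, g t ≠ 0 → hI v t ≤ δ) :
    ∑ t, g t * v t * hI u t ≤ δ * ∑ t, u t * g t := by
  rw [sum_mul_hI_eq_sum_hIstar_mul (fun t => g t * v t), mul_sum]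
  refine sum_le_sum fun x _ => ?_
  calc hIstar (fun t => g t * v t) x * u x ≤ δ * g x * u x :=
        mul_le_mul_of_nonneg_right (hT.hIstar_mul_le hg hsg hv hδ x) (hu x)
    _ = δ * (u x * g x) := by ring

end IsTreeOrder

section BiTree

variable {T1 T2 : Type*}

theorem hI1_mk [Fintype T1] [PartialOrder T1] (F : T1 × T2 → ℝ) (t : T1) (y : T2) :
    hI1 F (t, y) = hI (fun b => F (b, y)) t := rfl

theorem hI1_nonneg [Fintype T1] [PartialOrder T1] {F : T1 × T2 → ℝ} (hF : ∀ a, 0 ≤ F a)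
    (a : T1 × T2) : 0 ≤ hI1 F a :=
  sum_nonneg fun t _ => by split_ifs <;> simp [hF _]

theorem hI2_nonneg [Fintype T2] [PartialOrder T2] {F : T1 × T2 → ℝ} (hF : ∀ a, 0 ≤ F a)
    (a : T1 × T2) : 0 ≤ hI2 F a :=
  sum_nonneg fun t _ => by split_ifs <;> simp [hF _]

theorem hI_eq_hI1_hI2 [Fintype T1] [PartialOrder T1] [Fintype T2] [PartialOrder T2]
    (F : T1 × T2 → ℝ) (a : T1 × T2) : hI F a = hI1 (hI2 F) a := by
  simp only [hI, hI1, hI2, Fintype.sum_prod_type, Prod.le_def, ite_and, sum_ite_irrel,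
    sum_const_zero]

theorem hI_tensor_eq_hI_mul_hI2 [Fintype T1] [PartialOrder T1] [Fintype T2] [PartialOrder T2]
    (w1 : T1 → ℝ) (w2 : T2 → ℝ) (f : T1 × T2 → ℝ) (t : T1) (y : T2) :
    hI (fun x => w1 x.1 * w2 x.2 * f x) (t, y)
      = hI (fun d => w1 d * hI2 (fun x => w2 x.2 * f x) (d, y)) t := by
  rw [hI_eq_hI1_hI2, hI1_mk]
  simp only [hI2, mul_sum, mul_ite, mul_zero, mul_assoc]

theorem sum_tensor_mul_hI1_mul_hI2_le [Fintype T1] [PartialOrder T1] [Fintype T2]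
    [PartialOrder T2] (h1 : IsTreeOrder T1) {w1 : T1 → ℝ} {w2 : T2 → ℝ}
    (hw1 : ∀ x, 0 ≤ w1 x) (hw2 : ∀ x, 0 ≤ w2 x) {f : T1 × T2 → ℝ} (hf : ∀ a, 0 ≤ f a)
    (hs1 : Superadd1 f) {δ : ℝ}
    (hsupp : ∀ a, f a ≠ 0 → hI (fun x => w1 x.1 * w2 x.2 * f x) a ≤ δ) :
    ∑ a, (w1 a.1 * w2 a.2 * f a) * hI1 (fun x => w1 x.1 * f x) a *
        hI2 (fun x => w2 x.2 * f x) a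
      ≤ δ * ∑ a, w1 a.1 * w2 a.2 * f a ^ 2 := by
  have hrow (y : T2) : ∑ t, f (t, y) * (w1 t * hI2 (fun x => w2 x.2 * f x) (t, y)) *
      hI (fun t => w1 t * f (t, y)) t ≤ δ * ∑ t, w1 t * f (t, y) * f (t, y) :=
    h1.sum_mul_mul_hI_le (fun t => hf _) (fun t => hs1 t y)
      (fun t => mul_nonneg (hw1 t) (hI2_nonneg (fun a => mul_nonneg (hw2 _) (hf a)) _))
      (fun t => mul_nonneg (hw1 t) (hf _))
      (fun t ht => hI_tensor_eq_hI_mul_hI2 w1 w2 f t y ▸ hsupp (t, y) ht)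
  calc ∑ a, (w1 a.1 * w2 a.2 * f a) * hI1 (fun x => w1 x.1 * f x) a *
          hI2 (fun x => w2 x.2 * f x) a
      = ∑ y, w2 y * ∑ t, f (t, y) * (w1 t * hI2 (fun x => w2 x.2 * f x) (t, y)) *
          hI (fun t => w1 t * f (t, y)) t := by
        simp only [Fintype.sum_prod_type_right, mul_sum, hI1_mk]
        exact sum_congr rfl fun y _ => sum_congr rfl fun t _ => by ring
    _ ≤ ∑ y, w2 y * (δ * ∑ t, w1 t * f (t, y) * f (t, y)) :=
        sum_le_sum fun y _ => mul_le_mul_of_nonneg_left (hrow y) (hw2 y)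
    _ = δ * ∑ a, w1 a.1 * w2 a.2 * f a ^ 2 := by
        simp only [Fintype.sum_prod_type_right, mul_sum]
        exact sum_congr rfl fun y _ => sum_congr rfl fun t _ => by ring

end BiTree

theorem stmt11_general {T1 T2 : Type*} [Fintype T1] [PartialOrder T1] [Fintype T2] [PartialOrder T2]
    (h1 : IsTreeOrder T1)
    (w1 : T1 → ℝ) (w2 : T2 → ℝ) (hw1 : ∀ x, 0 ≤ w1 x) (hw2 : ∀ x, 0 ≤ w2 x)
    (f : T1 × T2 → ℝ) (hf : ∀ a, 0 ≤ f a)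
    (hs1 : Superadd1 f) (δ : ℝ)
    (hsupp : ∀ a, f a ≠ 0 → hI (fun x => w1 x.1 * w2 x.2 * f x) a ≤ δ) :
    ∑ a, (w1 a.1 * w2 a.2 * f a) * hI1 (fun x => w1 x.1 * f x) a *
        hI2 (fun x => w2 x.2 * f x) a * hI (fun x => w1 x.1 * w2 x.2 * f x) a
      ≤ δ ^ 2 * ∑ a, w1 a.1 * w2 a.2 * f a ^ 2 := by
  have hwf (a : T1 × T2) : 0 ≤ w1 a.1 * w2 a.2 * f a :=
    mul_nonneg (mul_nonneg (hw1 _) (hw2 _)) (hf a)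
  obtain hδ | hδ := lt_or_ge δ 0
  · have hf0 : ∀ a, f a = 0 := fun a => by_contra fun ha =>
      (hsupp a ha).not_gt (hδ.trans_le (hI_nonneg_s11 hwf a))
    simp [hf0]
  calc ∑ a, (w1 a.1 * w2 a.2 * f a) * hI1 (fun x => w1 x.1 * f x) a *
          hI2 (fun x => w2 x.2 * f x) a * hI (fun x => w1 x.1 * w2 x.2 * f x) a
      ≤ δ * ∑ a, (w1 a.1 * w2 a.2 * f a) * hI1 (fun x => w1 x.1 * f x) a *
          hI2 (fun x => w2 x.2 * f x) a := by
        rw [mul_sum]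
        refine sum_le_sum fun a _ => ?_
        by_cases ha : f a = 0
        · simp [ha]
        rw [mul_comm δ]
        exact mul_le_mul_of_nonneg_left (hsupp a ha) (mul_nonneg (mul_nonneg (hwf a)
          (hI1_nonneg (fun x => mul_nonneg (hw1 _) (hf x)) a))
          (hI2_nonneg (fun x => mul_nonneg (hw2 _) (hf x)) a))
    _ ≤ δ * (δ * ∑ a, w1 a.1 * w2 a.2 * f a ^ 2) :=
        mul_le_mul_of_nonneg_left (sum_tensor_mul_hI1_mul_hI2_le h1 hw1 hw2 hf hs1 hsupp) hδ
    _ = δ ^ 2 * ∑ a, w1 a.1 * w2 a.2 * f a ^ 2 := by ring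

theorem stmt11 {T1 T2 : Type*} [Fintype T1] [PartialOrder T1] [Fintype T2] [PartialOrder T2]
    (h1 : IsTreeOrder T1) (h2 : IsTreeOrder T2)
    (w1 : T1 → ℝ) (w2 : T2 → ℝ) (hw1 : ∀ x, 0 ≤ w1 x) (hw2 : ∀ x, 0 ≤ w2 x)
    (f : T1 × T2 → ℝ) (hf : ∀ a, 0 ≤ f a)
    (hs1 : Superadd1 f) (hs2 : Superadd2 f) (δ : ℝ)
    (hsupp : ∀ a, f a ≠ 0 → hI (fun x => w1 x.1 * w2 x.2 * f x) a ≤ δ) :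
    ∑ a, (w1 a.1 * w2 a.2 * f a) * hI1 (fun x => w1 x.1 * f x) a *
        hI2 (fun x => w2 x.2 * f x) a * hI (fun x => w1 x.1 * w2 x.2 * f x) a
      ≤ δ ^ 2 * ∑ a, w1 a.1 * w2 a.2 * f a ^ 2 :=
  stmt11_general h1 w1 w2 hw1 hw2 f hf hs1 δ hsupp
end
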